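/- arXiv:math/0409089 — 6 statements merged into one kernel-verified Lean document; each statement's English description precedes it below -/
import Mathlib

section
/- Let Q : ℝ → ℝ be any smooth function and define F : ℝ² → ℝ² by F(ξ,t) = (ξ + t, t³ + t²·Q(ξ + t)). Then the critical set of F is exactly {(ξ,t) : t·(3t + 2Q(ξ+t)) = 0}, and the critical value set of F equals {(x, 0) : x ∈ ℝ} ∪ {(x, (4/27)·Q(x)³) : x ∈ ℝ}. -/
open Filter Asymptotics

noncomputable def jacDet (f : ℝ × ℝ → ℝ × ℝ) (p : ℝ × ℝ) : ℝ :=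
  LinearMap.det ((fderiv ℝ f p) : (ℝ × ℝ) →ₗ[ℝ] (ℝ × ℝ))

/-- The critical (criminant) set of a map of the plane: points where det Df = 0. -/
def critSet (f : ℝ × ℝ → ℝ × ℝ) : Set (ℝ × ℝ) := {p | jacDet f p = 0}

/-- The critical value set (envelope): image of the critical set. -/
noncomputable def critVal (f : ℝ × ℝ → ℝ × ℝ) : Set (ℝ × ℝ) := Set.image f (critSet f)

lemma det_two (L : (ℝ × ℝ) →ₗ[ℝ] (ℝ × ℝ)) :
    LinearMap.det L = (L (1,0)).1 * (L (0,1)).2 - (L (0,1)).1 * (L (1,0)).2 := by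
  rw [← LinearMap.det_toMatrix (Module.Basis.finTwoProd ℝ), Matrix.det_fin_two]
  simp [LinearMap.toMatrix_apply]

lemma jac_eq (Q : ℝ → ℝ) (hQ : ContDiff ℝ (⊤ : ℕ∞) Q) (p : ℝ × ℝ) :
    jacDet (fun p : ℝ × ℝ => (p.1 + p.2, p.2 ^ 3 + p.2 ^ 2 * Q (p.1 + p.2))) p
      = p.2 * (3 * p.2 + 2 * Q (p.1 + p.2)) := by
  have h1 : HasFDerivAt (fun p : ℝ × ℝ => p.1 + p.2)
      (ContinuousLinearMap.fst ℝ ℝ ℝ + ContinuousLinearMap.snd ℝ ℝ ℝ) p :=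
    (hasFDerivAt_fst.add hasFDerivAt_snd)
  have hQd : HasDerivAt Q (deriv Q (p.1 + p.2)) (p.1 + p.2) :=
    ((hQ.differentiable (by simp)) (p.1 + p.2)).hasDerivAt
  have hc : HasFDerivAt (fun p : ℝ × ℝ => Q (p.1 + p.2))
      (deriv Q (p.1 + p.2) • (ContinuousLinearMap.fst ℝ ℝ ℝ + ContinuousLinearMap.snd ℝ ℝ ℝ)) p :=
    hQd.comp_hasFDerivAt p h1
  have h2 : HasFDerivAt (fun p : ℝ × ℝ => p.2) (ContinuousLinearMap.snd ℝ ℝ ℝ) p :=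
    hasFDerivAt_snd
  have hsq := h2.mul h2
  have hcube := hsq.mul h2
  have hmul := hsq.mul hc
  have e3 : (fun p : ℝ × ℝ => p.2 ^ 3 + p.2 ^ 2 * Q (p.1 + p.2))
      = fun p : ℝ × ℝ => (p.2 * p.2) * p.2 + (p.2 * p.2) * Q (p.1 + p.2) := by
    funext p; ring
  have hsnd : HasFDerivAt (fun p : ℝ × ℝ => p.2 ^ 3 + p.2 ^ 2 * Q (p.1 + p.2)) _ p :=
    e3 ▸ (show HasFDerivAt (fun p : ℝ × ℝ => (p.2 * p.2) * p.2 + (p.2 * p.2) * Q (p.1 + p.2)) _ p from hcube.add hmul)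
  have hF := HasFDerivAt.prodMk h1 hsnd
  rw [jacDet, hF.fderiv, det_two]
  simp [ContinuousLinearMap.prod_apply]
  ring

/-- the critical set and envelope of the family
`F(ξ,t) = (ξ + t, t³ + t² Q(ξ + t))`. -/
theorem stmt2 (Q : ℝ → ℝ) (hQ : ContDiff ℝ (⊤ : ℕ∞) Q)
    (F : ℝ × ℝ → ℝ × ℝ)
    (hF : ∀ ξ t : ℝ, F (ξ, t) = (ξ + t, t ^ 3 + t ^ 2 * Q (ξ + t))) :
    critSet F = {p : ℝ × ℝ | p.2 * (3 * p.2 + 2 * Q (p.1 + p.2)) = 0} ∧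
    critVal F = (Set.range fun x : ℝ => (x, (0 : ℝ))) ∪
      (Set.range fun x : ℝ => (x, (4 / 27) * (Q x) ^ 3)) := by
  have hFe : F = fun p : ℝ × ℝ => (p.1 + p.2, p.2 ^ 3 + p.2 ^ 2 * Q (p.1 + p.2)) := by
    funext p
    obtain ⟨ξ, t⟩ := p
    exact hF ξ t
  have hcrit : critSet F = {p : ℝ × ℝ | p.2 * (3 * p.2 + 2 * Q (p.1 + p.2)) = 0} := by
    ext p
    simp only [critSet, Set.mem_setOf_eq, hFe, jac_eq Q hQ p]
  refine ⟨hcrit, ?_⟩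
  ext q
  constructor
  · rintro ⟨p, hp, rfl⟩
    rw [hcrit] at hp
    simp only [Set.mem_setOf_eq, mul_eq_zero] at hp
    obtain ⟨ξ, t⟩ := p
    simp only at hp
    rw [hF ξ t]
    rcases hp with h0 | h0
    · left
      exact ⟨ξ + t, by simp [h0]⟩
    · right
      refine ⟨ξ + t, ?_⟩
      have key : ∀ q s : ℝ, 3 * s + 2 * q = 0 → s ^ 3 + s ^ 2 * q = 4 / 27 * q ^ 3 := by
        intro q s h
        have hs : s = -(2/3) * q := by linarith
        rw [hs]; ring
      have : t ^ 3 + t ^ 2 * Q (ξ + t) = 4 / 27 * Q (ξ + t) ^ 3 := key _ _ h0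
      simp [this]
  · rintro (⟨x, rfl⟩ | ⟨x, rfl⟩)
    · refine ⟨(x, 0), ?_, ?_⟩
      · rw [hcrit]; simp
      · rw [hF x 0]; norm_num
    · refine ⟨(x + (2/3) * Q x, -(2/3) * Q x), ?_, ?_⟩
      · rw [hcrit]
        simp only [Set.mem_setOf_eq]
        have hx : x + (2/3) * Q x + -(2/3) * Q x = x := by ring
        rw [hx]
        ring
      · rw [hF]
        have hx : x + (2/3) * Q x + -(2/3) * Q x = x := by ring
        rw [hx]
        refine Prod.ext (by ring) (by ring)
end

section
/- Fix a natural number n ≥ 1 and define h'_n : ℝ² → ℝ² by h'_n(ξ,t) = (ξ + t, t³ + t²·(t + ξ)^{n+1}) (the normal form of the singularity T_n). Then the critical value set of h'_n equals {(x,0) : x ∈ ℝ} ∪ {(x, (4/27)·x^{3n+3}) : x ∈ ℝ}. In particular, the envelope consists of the support y = 0 together with a second smooth branch, the graph of x ↦ (4/27)x^{3n+3}, which has tangency of order 3n+2 with the support at the origin (their difference vanishes at 0 to order exactly 3n+3). -/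
open Filter Asymptotics

/-- determinant of a linear endomorphism of ℝ² via its values on the standard basis -/
lemma det_formula (L : (ℝ × ℝ) →ₗ[ℝ] (ℝ × ℝ)) :
    LinearMap.det L =
      (L (1, 0)).1 * (L (0, 1)).2 - (L (0, 1)).1 * (L (1, 0)).2 := by
  rw [← LinearMap.det_toMatrix (Module.Basis.finTwoProd ℝ), Matrix.det_fin_two]
  simp [LinearMap.toMatrix_apply, Module.Basis.finTwoProd_zero, Module.Basis.finTwoProd_one]

/-- iterated derivative of a monomial -/
lemma iterCPow (c : ℝ) (m : ℕ) : ∀ k : ℕ,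
    iteratedDeriv k (fun x : ℝ => c * x ^ m) =
      fun x => c * (m.descFactorial k : ℝ) * x ^ (m - k) := by
  intro k
  induction k with
  | zero => simp
  | succ k ih =>
    rw [iteratedDeriv_succ, ih]
    funext x
    rw [deriv_const_mul _ (differentiableAt_pow _), deriv_pow_field]
    rw [Nat.descFactorial_succ, Nat.cast_mul, ← Nat.sub_sub]
    ring

/-- envelope of the normal form of the singularity `T_n`:
the support `y = 0` together with the graph of `x ↦ (4/27) x^(3n+3)`, which is
smooth and has tangency of order `3n+2` with the support at the origin. -/
theorem stmt3 (n : ℕ) (hn : 1 ≤ n)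
    (h'n : ℝ × ℝ → ℝ × ℝ)
    (hdef : ∀ ξ t : ℝ, h'n (ξ, t) = (ξ + t, t ^ 3 + t ^ 2 * (t + ξ) ^ (n + 1))) :
    critVal h'n = (Set.range fun x : ℝ => (x, (0 : ℝ))) ∪
      (Set.range fun x : ℝ => (x, (4 / 27) * x ^ (3 * n + 3))) ∧
    ContDiff ℝ (⊤ : ℕ∞) (fun x : ℝ => (4 / 27) * x ^ (3 * n + 3)) ∧
    (∀ k : ℕ, k < 3 * n + 3 →
      iteratedDeriv k (fun x : ℝ => (4 / 27) * x ^ (3 * n + 3)) 0 = 0) ∧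
    iteratedDeriv (3 * n + 3) (fun x : ℝ => (4 / 27) * x ^ (3 * n + 3)) 0 ≠ 0 := by
  have hfun : h'n = fun p : ℝ × ℝ =>
      (p.1 + p.2, p.2 ^ 3 + p.2 ^ 2 * (p.2 + p.1) ^ (n + 1)) := by
    funext p
    have := hdef p.1 p.2
    simpa using this
  -- the key algebraic identity
  have key : ∀ t x : ℝ, 3 * t + 2 * x ^ (n + 1) = 0 →
      t ^ 3 + t ^ 2 * x ^ (n + 1) = 4 / 27 * x ^ (3 * n + 3) := by
    intro t x h
    have ht : t = -(2 / 3) * x ^ (n + 1) := by linarith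
    rw [show 3 * n + 3 = (n + 1) * 3 by ring, pow_mul, ht]
    ring
  -- the jacobian determinant
  have hjac : ∀ p : ℝ × ℝ, jacDet h'n p =
      p.2 * (3 * p.2 + 2 * (p.2 + p.1) ^ (n + 1)) := by
    intro p
    have hfst : HasFDerivAt (fun p : ℝ × ℝ => p.1) (ContinuousLinearMap.fst ℝ ℝ ℝ) p :=
      hasFDerivAt_fst
    have hsnd : HasFDerivAt (fun p : ℝ × ℝ => p.2) (ContinuousLinearMap.snd ℝ ℝ ℝ) p :=
      hasFDerivAt_snd
    have hsum : HasFDerivAt (fun p : ℝ × ℝ => p.2 + p.1)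
        (ContinuousLinearMap.snd ℝ ℝ ℝ + ContinuousLinearMap.fst ℝ ℝ ℝ) p := hsnd.add hfst
    have hcube : HasFDerivAt (fun p : ℝ × ℝ => p.2 ^ 3)
        (((3 : ℕ) * p.2 ^ 2 : ℝ) • ContinuousLinearMap.snd ℝ ℝ ℝ) p :=
      (hasDerivAt_pow 3 p.2).comp_hasFDerivAt p hsnd
    have hsq : HasFDerivAt (fun p : ℝ × ℝ => p.2 ^ 2)
        (((2 : ℕ) * p.2 ^ 1 : ℝ) • ContinuousLinearMap.snd ℝ ℝ ℝ) p :=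
      (hasDerivAt_pow 2 p.2).comp_hasFDerivAt p hsnd
    have hpow : HasFDerivAt (fun p : ℝ × ℝ => (p.2 + p.1) ^ (n + 1))
        ((((n + 1 : ℕ)) * (p.2 + p.1) ^ n : ℝ) •
          (ContinuousLinearMap.snd ℝ ℝ ℝ + ContinuousLinearMap.fst ℝ ℝ ℝ)) p := by
      have := (hasDerivAt_pow (n + 1) (p.2 + p.1)).comp_hasFDerivAt p hsum
      rw [Nat.add_sub_cancel] at this
      exact this
    have hmul := hsq.mul hpow
    have htot := hcube.add hmul
    have hD : HasFDerivAt h'n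
        ((ContinuousLinearMap.fst ℝ ℝ ℝ + ContinuousLinearMap.snd ℝ ℝ ℝ).prod
          ((((3 : ℕ) * p.2 ^ 2 : ℝ) • ContinuousLinearMap.snd ℝ ℝ ℝ) +
            (p.2 ^ 2 • ((((n + 1 : ℕ)) * (p.2 + p.1) ^ n : ℝ) •
              (ContinuousLinearMap.snd ℝ ℝ ℝ + ContinuousLinearMap.fst ℝ ℝ ℝ)) +
             (p.2 + p.1) ^ (n + 1) • (((2 : ℕ) * p.2 ^ 1 : ℝ) •
              ContinuousLinearMap.snd ℝ ℝ ℝ)))) p := by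
      rw [hfun]
      exact HasFDerivAt.prodMk (hfst.add hsnd) htot
    rw [jacDet, hD.fderiv, det_formula]
    simp [ContinuousLinearMap.prod_apply]
    ring
  refine ⟨?_, ?_, ?_, ?_⟩
  · -- the envelope
    ext q
    obtain ⟨x, y⟩ := q
    constructor
    · rintro ⟨p, hp, hfp⟩
      rw [hfun] at hfp
      simp only [Prod.mk.injEq] at hfp
      obtain ⟨hx, hy⟩ := hfp
      have hc : p.2 * (3 * p.2 + 2 * (p.2 + p.1) ^ (n + 1)) = 0 := by
        rw [← hjac p]; exact hp
      rcases mul_eq_zero.1 hc with h0 | h0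
      · left
        refine ⟨p.1, ?_⟩
        simp [h0] at hy
        simp [← hx, ← hy, h0]
      · right
        refine ⟨x, ?_⟩
        have hx' : p.2 + p.1 = x := by rw [← hx]; ring
        rw [hx'] at h0
        have := key p.2 x h0
        rw [hx'] at hy
        rw [← hy, this]
    · rintro (⟨x₀, hx₀⟩ | ⟨x₀, hx₀⟩)
      · refine ⟨(x₀, 0), ?_, ?_⟩
        · show jacDet h'n (x₀, 0) = 0
          rw [hjac]; simp
        · rw [hfun]
          simp only [Prod.mk.injEq] at hx₀ ⊢
          constructor
          · simp [← hx₀.1]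
          · simp [← hx₀.2]
      · set t := -(2 / 3) * x₀ ^ (n + 1) with ht
        refine ⟨(x₀ - t, t), ?_, ?_⟩
        · show jacDet h'n (x₀ - t, t) = 0
          rw [hjac]
          have : t + (x₀ - t) = x₀ := by ring
          rw [this]
          have : 3 * t + 2 * x₀ ^ (n + 1) = 0 := by rw [ht]; ring
          rw [this, mul_zero]
        · rw [hfun]
          simp only [Prod.mk.injEq] at hx₀ ⊢
          have h1 : t + (x₀ - t) = x₀ := by ring
          have h2 : 3 * t + 2 * x₀ ^ (n + 1) = 0 := by rw [ht]; ring
          constructor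
          · rw [← hx₀.1]; ring
          · rw [h1, key t x₀ h2, ← hx₀.2]
  · -- smoothness
    exact contDiff_const.mul (contDiff_id.pow _)
  · -- vanishing derivatives
    intro k hk
    rw [iterCPow]
    have : 3 * n + 3 - k ≠ 0 := by omega
    simp [zero_pow this]
  · -- nonvanishing top derivative
    rw [iterCPow]
    simp only [Nat.sub_self, pow_zero, mul_one]
    have : (3 * n + 3).descFactorial (3 * n + 3) ≠ 0 :=
      Nat.descFactorial_self (3 * n + 3) ▸ Nat.factorial_ne_zero _
    positivity
end

section
/- Fix a natural number n ≥ 1 and define f'_n : ℝ² → ℝ² by f'_n(ξ,t) = (ξ + t, t²(t + ξ) + t⁴ + t^{2n+3}) (the normal form of the singularity S_{1,n}). Then the critical value set of f'_n equals {(x,0) : x ∈ ℝ} ∪ {(−2t² − ((2n+3)/2)·t^{2n+1}, −t⁴ − ((2n+1)/2)·t^{2n+3}) : t ∈ ℝ}. Moreover there exists ε > 0 such that for all t with 0 < |t| < ε the second coordinate −t⁴ − ((2n+1)/2)t^{2n+3} is strictly negative; that is, near the origin the second envelope branch (a cusp of order (2n+3)/2) lies entirely in one of the two half-planes cut off by the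 support y = 0 (it is non-symmetric with respect to the support). -/
open Filter Asymptotics

lemma detCLM (L : (ℝ × ℝ) →L[ℝ] (ℝ × ℝ)) :
    LinearMap.det (L : (ℝ × ℝ) →ₗ[ℝ] (ℝ × ℝ)) =
      (L (1,0)).1 * (L (0,1)).2 - (L (0,1)).1 * (L (1,0)).2 := by
  rw [← LinearMap.det_toMatrix (Module.Basis.finTwoProd ℝ), Matrix.det_fin_two]
  simp [LinearMap.toMatrix_apply]

lemma snd_pow_hasFDerivAt (k : ℕ) (p : ℝ × ℝ) :
    HasFDerivAt (fun q : ℝ × ℝ => q.2 ^ k)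
      (((k : ℝ) * p.2 ^ (k - 1)) • ContinuousLinearMap.snd ℝ ℝ ℝ) p :=
  (hasDerivAt_pow k p.2).comp_hasFDerivAt p hasFDerivAt_snd

lemma jac_g (n : ℕ) (p : ℝ × ℝ) :
    jacDet (fun q : ℝ × ℝ => (q.1 + q.2, q.2 ^ 2 * (q.2 + q.1) + q.2 ^ 4 + q.2 ^ (2*n+3))) p
      = p.2 * (2 * p.1 + 2 * p.2 + 4 * p.2 ^ 2 + (2*(n:ℝ)+3) * p.2 ^ (2*n+1)) := by
  have h1 : HasFDerivAt (fun q : ℝ × ℝ => q.1 + q.2)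
      (ContinuousLinearMap.fst ℝ ℝ ℝ + ContinuousLinearMap.snd ℝ ℝ ℝ) p :=
    hasFDerivAt_fst.add hasFDerivAt_snd
  have h2 := (((snd_pow_hasFDerivAt 2 p).mul
      (((hasFDerivAt_snd (p := p)).add hasFDerivAt_fst))).add
      (snd_pow_hasFDerivAt 4 p)).add (snd_pow_hasFDerivAt (2*n+3) p)
  have h := (h1.prodMk h2).fderiv
  rw [jacDet, show fderiv ℝ (fun q : ℝ × ℝ => (q.1 + q.2, q.2 ^ 2 * (q.2 + q.1) + q.2 ^ 4 + q.2 ^ (2*n+3))) p = _ from h, detCLM]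
  have e1 : 2*n+3-1 = 2*n+2 := by omega
  have e2 : (2*n+2 : ℕ) = (2*n+1)+1 := by omega
  simp only [ContinuousLinearMap.prod_apply, ContinuousLinearMap.add_apply,
    ContinuousLinearMap.coe_fst', ContinuousLinearMap.coe_snd',
    ContinuousLinearMap.smul_apply, smul_eq_mul, e1, e2, Pi.add_apply]
  push_cast
  rw [pow_succ]
  ring

/-- envelope of the normal form of the singularity `S_{1,n}`:
the support `y = 0` together with a `(2n+3)/2`-cusp which lies (near the origin)
strictly on one side of the support. -/
theorem stmt5 (n : ℕ) (hn : 1 ≤ n)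
    (f'n : ℝ × ℝ → ℝ × ℝ)
    (hdef : ∀ ξ t : ℝ,
      f'n (ξ, t) = (ξ + t, t ^ 2 * (t + ξ) + t ^ 4 + t ^ (2 * n + 3))) :
    critVal f'n = (Set.range fun x : ℝ => (x, (0 : ℝ))) ∪
      (Set.range fun t : ℝ =>
        (-2 * t ^ 2 - ((2 * (n : ℝ) + 3) / 2) * t ^ (2 * n + 1),
         -t ^ 4 - ((2 * (n : ℝ) + 1) / 2) * t ^ (2 * n + 3))) ∧
    ∃ ε > (0 : ℝ), ∀ t : ℝ, 0 < |t| → |t| < ε →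
      -t ^ 4 - ((2 * (n : ℝ) + 1) / 2) * t ^ (2 * n + 3) < 0 := by
  have hfg : f'n = fun q : ℝ × ℝ => (q.1 + q.2, q.2 ^ 2 * (q.2 + q.1) + q.2 ^ 4 + q.2 ^ (2*n+3)) := by
    funext q
    exact hdef q.1 q.2
  constructor
  · ext z
    constructor
    · rintro ⟨p, hp, rfl⟩
      have hdet : p.2 * (2 * p.1 + 2 * p.2 + 4 * p.2 ^ 2 + (2*(n:ℝ)+3) * p.2 ^ (2*n+1)) = 0 := by
        rw [← jac_g n p, ← hfg]; exact hp
      rcases mul_eq_zero.1 hdet with ht | hx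
      · left
        refine ⟨p.1, ?_⟩
        rw [hfg]
        simp [ht, zero_pow]
      · right
        refine ⟨p.2, ?_⟩
        rw [hfg]
        have h1 : p.1 = -p.2 - 2 * p.2 ^ 2 - ((2*(n:ℝ)+3)/2) * p.2 ^ (2*n+1) := by
          linarith
        simp only [Prod.mk.injEq]
        constructor
        · rw [h1]; ring
        · rw [h1]; ring
    · rintro (⟨x, rfl⟩ | ⟨t, rfl⟩)
      · refine ⟨(x, 0), ?_, ?_⟩
        · show jacDet f'n (x, 0) = 0
          rw [hfg, jac_g]
          simp
        · rw [hfg]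
          simp [zero_pow]
      · refine ⟨(-t - 2 * t ^ 2 - ((2*(n:ℝ)+3)/2) * t ^ (2*n+1), t), ?_, ?_⟩
        · show jacDet f'n _ = 0
          rw [hfg, jac_g]
          ring
        · rw [hfg]
          simp only [Prod.mk.injEq]
          constructor
          · ring
          · ring
  · refine ⟨1 / (2*(n:ℝ)+1), by positivity, fun t ht htε => ?_⟩
    have htne : t ≠ 0 := by
      intro h; rw [h] at ht; simp at ht
    have ht4 : 0 < t ^ 4 := by positivity
    set c : ℝ := (2*(n:ℝ)+1)/2 with hc
    have hcpos : 0 < c := by positivity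
    set k : ℕ := 2*n - 1 with hk
    have hk1 : 1 ≤ k := by omega
    have hexp : t ^ (2*n+3) = t ^ 4 * t ^ k := by
      rw [← pow_add]; congr 1; omega
    have htle1 : |t| ≤ 1 := by
      have : 1/(2*(n:ℝ)+1) ≤ 1 := by
        rw [div_le_one (by positivity)]
        have : (1:ℝ) ≤ (n:ℝ) := by exact_mod_cast hn
        linarith
      linarith
    have habs : |c * t ^ k| < 1 := by
      rw [abs_mul, abs_pow, abs_of_pos hcpos]
      have h1 : |t| ^ k ≤ |t| ^ 1 :=
        pow_le_pow_of_le_one (abs_nonneg t) htle1 hk1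
      rw [pow_one] at h1
      have h2 : c * |t| ^ k ≤ c * |t| := by
        exact mul_le_mul_of_nonneg_left h1 hcpos.le
      have h3 : c * |t| < c * (1/(2*(n:ℝ)+1)) :=
        mul_lt_mul_of_pos_left htε hcpos
      have h4 : c * (1/(2*(n:ℝ)+1)) = 1/2 := by
        rw [hc]; field_simp
      linarith
    have hpos : 0 < 1 + c * t ^ k := by
      have := abs_lt.1 habs
      linarith [this.1]
    have : 0 < t ^ 4 * (1 + c * t ^ k) := mul_pos ht4 hpos
    rw [hexp]
    nlinarith [this]
end

section
/- For each choice of sign ε = ±1, define g'_3 : ℝ² → ℝ² by g'_3(ξ,t) = (ξ + t, t²(t + ξ) + t⁵ + ε·t⁹) (the normal forms of the singularities S±_{2,3}). Then the critical value set of g'_3 equals {(x,0) : x ∈ ℝ} ∪ {(−(5/2)t³ − ε·(9/2)t⁷, −(3/2)t⁵ − ε·(7/2)t⁹) : t ∈ ℝ}. In particular the envelope has, besides the support y = 0, a second branch with a singularity of order 5/3 at the origin, tangent to the support. -/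
open Filter Asymptotics

lemma jacDet_eq' (f : ℝ × ℝ → ℝ × ℝ) (p : ℝ × ℝ) :
    jacDet f p = (fderiv ℝ f p (1,0)).1 * (fderiv ℝ f p (0,1)).2
      - (fderiv ℝ f p (0,1)).1 * (fderiv ℝ f p (1,0)).2 := by
  rw [jacDet, ← LinearMap.det_toMatrix (Module.Basis.finTwoProd ℝ), Matrix.det_fin_two]
  simp [LinearMap.toMatrix_apply, Module.Basis.finTwoProd_zero, Module.Basis.finTwoProd_one,
    Module.Basis.coe_finTwoProd_repr]

lemma jac_val' (ε : ℝ) (p : ℝ × ℝ) :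
    jacDet (fun p : ℝ × ℝ => (p.1 + p.2, p.2^2*(p.2+p.1)+p.2^5+ε*p.2^9)) p
      = 2*p.2^2 + 2*p.2*p.1 + 5*p.2^4 + 9*ε*p.2^8 := by
  have hpow : ∀ n : ℕ, HasFDerivAt (fun p : ℝ × ℝ => p.2 ^ n)
      ((n * p.2 ^ (n - 1)) • ContinuousLinearMap.snd ℝ ℝ ℝ) p := fun n =>
    (hasDerivAt_pow n p.2).comp_hasFDerivAt p hasFDerivAt_snd
  have h := (hasFDerivAt_fst.fun_add hasFDerivAt_snd).prodMk
    ((((hpow 2).fun_mul' (hasFDerivAt_snd.fun_add hasFDerivAt_fst)).fun_add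
      (hpow 5)).fun_add ((hpow 9).const_mul ε))
  rw [jacDet_eq', h.fderiv]
  simp [ContinuousLinearMap.smulRight_apply]
  ring

lemma iter_comb' (a b : ℝ) (m n : ℕ) : ∀ k : ℕ,
    iteratedDeriv k (fun t : ℝ => a * t ^ m + b * t ^ n)
      = fun t => a * (m.descFactorial k) * t ^ (m - k) + b * (n.descFactorial k) * t ^ (n - k) := by
  intro k
  induction k with
  | zero => simp
  | succ k ih =>
    rw [iteratedDeriv_succ, ih]
    funext t
    have h1 : ∀ (c : ℝ) (p : ℕ), deriv (fun t : ℝ => c * t ^ p) t = c * (p * t ^ (p - 1)) := by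
      intro c p
      rw [deriv_const_mul_field]
      simp
    rw [deriv_fun_add ((differentiable_const _).mul (differentiable_pow _) |>.differentiableAt)
        ((differentiable_const _).mul (differentiable_pow _) |>.differentiableAt), h1, h1,
        Nat.descFactorial_succ, Nat.descFactorial_succ,
        show m - (k+1) = m - k - 1 from (Nat.sub_sub m k 1).symm,
        show n - (k+1) = n - k - 1 from (Nat.sub_sub n k 1).symm]
    push_cast
    ring

/-- envelope of the normal forms `g'_3` of the singularities `S±_{2,3}`:
the support `y = 0` and a second branch with a singularity of order 5/3 at the
origin, tangent to the support. -/
theorem stmt7 (ε : ℝ) (hε : ε = 1 ∨ ε = -1)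
    (g'3 : ℝ × ℝ → ℝ × ℝ)
    (hdef : ∀ ξ t : ℝ,
      g'3 (ξ, t) = (ξ + t, t ^ 2 * (t + ξ) + t ^ 5 + ε * t ^ 9)) :
    critVal g'3 = (Set.range fun x : ℝ => (x, (0 : ℝ))) ∪
      (Set.range fun t : ℝ =>
        (-(5 / 2) * t ^ 3 - ε * (9 / 2) * t ^ 7,
         -(3 / 2) * t ^ 5 - ε * (7 / 2) * t ^ 9)) ∧
    (∀ k : ℕ, k < 3 →
      iteratedDeriv k (fun t : ℝ => -(5 / 2) * t ^ 3 - ε * (9 / 2) * t ^ 7) 0 = 0) ∧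
    iteratedDeriv 3 (fun t : ℝ => -(5 / 2) * t ^ 3 - ε * (9 / 2) * t ^ 7) 0 ≠ 0 ∧
    (∀ k : ℕ, k < 5 →
      iteratedDeriv k (fun t : ℝ => -(3 / 2) * t ^ 5 - ε * (7 / 2) * t ^ 9) 0 = 0) ∧
    iteratedDeriv 5 (fun t : ℝ => -(3 / 2) * t ^ 5 - ε * (7 / 2) * t ^ 9) 0 ≠ 0 := by
  have hg : g'3 = fun p : ℝ × ℝ => (p.1 + p.2, p.2^2*(p.2+p.1)+p.2^5+ε*p.2^9) := by
    funext p
    obtain ⟨ξ, t⟩ := p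
    rw [hdef]
  have hrw1 : (fun t : ℝ => -(5 / 2) * t ^ 3 - ε * (9 / 2) * t ^ 7)
      = fun t : ℝ => (-(5/2)) * t ^ 3 + (-(ε * (9/2))) * t ^ 7 := by funext t; ring
  have hrw2 : (fun t : ℝ => -(3 / 2) * t ^ 5 - ε * (7 / 2) * t ^ 9)
      = fun t : ℝ => (-(3/2)) * t ^ 5 + (-(ε * (7/2))) * t ^ 9 := by funext t; ring
  refine ⟨?_, ?_, ?_, ?_, ?_⟩
  · subst hg
    ext ⟨x, y⟩
    constructor
    · rintro ⟨⟨ξ, t⟩, hcrit, himg⟩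
      have hc : 2*t^2 + 2*t*ξ + 5*t^4 + 9*ε*t^8 = 0 := by
        rw [← jac_val' ε (ξ, t)]
        exact hcrit
      have hx : ξ + t = x := congrArg Prod.fst himg
      have hy : t^2*(t+ξ) + t^5 + ε*t^9 = y := congrArg Prod.snd himg
      by_cases ht : t = 0
      · left
        exact ⟨x, by simp [← hy, ht, ← hx, ht]⟩
      · right
        refine ⟨t, ?_⟩
        have h2t : (2*t : ℝ) ≠ 0 := mul_ne_zero two_ne_zero ht
        have hxx : -(5/2) * t^3 - ε * (9/2) * t^7 = x := by
          apply mul_left_cancel₀ h2t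
          linear_combination 2*t*hx - hc
        have hyy : -(3/2) * t^5 - ε * (7/2) * t^9 = y := by
          linear_combination hy - (t/2) * hc
        exact Prod.ext hxx hyy
    · rintro (⟨x', hx'⟩ | ⟨t, ht⟩)
      · refine ⟨(x', 0), ?_, ?_⟩
        · show jacDet _ _ = 0
          rw [jac_val']
          norm_num
        · simpa using hx'
      · refine ⟨(-(5/2)*t^3 - ε*(9/2)*t^7 - t, t), ?_, ?_⟩
        · show jacDet _ _ = 0
          rw [jac_val']
          ring
        · rw [← ht]
          exact Prod.ext (by ring) (by ring)
  · intro k hk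
    rw [hrw1, iter_comb']
    have h3 : 3 - k ≠ 0 := by omega
    have h7 : 7 - k ≠ 0 := by omega
    simp [zero_pow h3, zero_pow h7]
  · rw [hrw1, iter_comb']
    norm_num [Nat.descFactorial]
  · intro k hk
    rw [hrw2, iter_comb']
    have h5 : 5 - k ≠ 0 := by omega
    have h9 : 9 - k ≠ 0 := by omega
    simp [zero_pow h5, zero_pow h9]
  · rw [hrw2, iter_comb']
    norm_num [Nat.descFactorial]
end

section
/- Define g'_4 : ℝ² → ℝ² by g'_4(ξ,t) = (ξ + t, t²(t + ξ) + t⁵) (the normal form of the singularity S_{2,4}). Then the critical value set of g'_4 equals {(x,0) : x ∈ ℝ} ∪ {(−(5/2)t³, −(3/2)t⁵) : t ∈ ℝ}. In particular the envelope has, besides the support y = 0, a second branch with a singularity of order 5/3 at the origin, tangent to the support. -/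
open Filter Asymptotics

noncomputable def Lmap (ξ t : ℝ) : ℝ × ℝ →L[ℝ] ℝ × ℝ :=
  (ContinuousLinearMap.fst ℝ ℝ ℝ + ContinuousLinearMap.snd ℝ ℝ ℝ).prod
    (t^2 • ContinuousLinearMap.fst ℝ ℝ ℝ +
      (2*t*(t+ξ) + t^2 + 5*t^4) • ContinuousLinearMap.snd ℝ ℝ ℝ)

lemma hF (ξ t : ℝ) : HasFDerivAt
    (fun p : ℝ × ℝ => (p.1 + p.2, p.2*p.2*(p.2+p.1) + p.2*p.2*p.2*p.2*p.2))
    (Lmap ξ t) (ξ, t) := by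
  have h1 : HasFDerivAt (fun p : ℝ × ℝ => p.1) (ContinuousLinearMap.fst ℝ ℝ ℝ) (ξ, t) :=
    hasFDerivAt_fst
  have h2 : HasFDerivAt (fun p : ℝ × ℝ => p.2) (ContinuousLinearMap.snd ℝ ℝ ℝ) (ξ, t) :=
    hasFDerivAt_snd
  have h := (h1.add h2).prodMk
    (((h2.mul h2).mul (h2.add h1)).add ((((h2.mul h2).mul h2).mul h2).mul h2))
  refine h.congr_fderiv ?_
  refine ContinuousLinearMap.ext fun x => ?_
  refine Prod.ext ?_ ?_ <;>
    · simp [Lmap, ContinuousLinearMap.prod_apply, smul_smul]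
      try ring

lemma detL (ξ t : ℝ) : LinearMap.det ((Lmap ξ t : ℝ × ℝ →L[ℝ] ℝ × ℝ) : (ℝ × ℝ) →ₗ[ℝ] (ℝ × ℝ)) =
    t * (2*t + 2*ξ + 5*t^3) := by
  rw [← LinearMap.det_toMatrix (Module.Basis.finTwoProd ℝ), Matrix.det_fin_two]
  simp [LinearMap.toMatrix_apply, Module.Basis.finTwoProd, Lmap]
  ring

lemma dc (c : ℝ) (n : ℕ) : deriv (fun t : ℝ => c * t^n) = fun t => c * n * t^(n-1) := by
  ext t
  rw [deriv_const_mul _ (differentiable_pow n).differentiableAt, deriv_pow_field]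
  ring

/-- envelope of the normal form `g'_4` of the singularity `S_{2,4}`:
the support `y = 0` and a second branch with a singularity of order 5/3 at the
origin, tangent to the support. -/
theorem stmt8 (g'4 : ℝ × ℝ → ℝ × ℝ)
    (hdef : ∀ ξ t : ℝ, g'4 (ξ, t) = (ξ + t, t ^ 2 * (t + ξ) + t ^ 5)) :
    critVal g'4 = (Set.range fun x : ℝ => (x, (0 : ℝ))) ∪
      (Set.range fun t : ℝ => (-(5 / 2) * t ^ 3, -(3 / 2) * t ^ 5)) ∧
    (∀ k : ℕ, k < 3 →
      iteratedDeriv k (fun t : ℝ => -(5 / 2) * t ^ 3) 0 = 0) ∧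
    iteratedDeriv 3 (fun t : ℝ => -(5 / 2) * t ^ 3) 0 ≠ 0 ∧
    (∀ k : ℕ, k < 5 →
      iteratedDeriv k (fun t : ℝ => -(3 / 2) * t ^ 5) 0 = 0) ∧
    iteratedDeriv 5 (fun t : ℝ => -(3 / 2) * t ^ 5) 0 ≠ 0 := by
  have hfun : g'4 = fun p : ℝ × ℝ =>
      (p.1 + p.2, p.2*p.2*(p.2+p.1) + p.2*p.2*p.2*p.2*p.2) := by
    funext p
    obtain ⟨ξ, t⟩ := p
    rw [hdef]
    exact Prod.ext rfl (by ring)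
  have jac : ∀ ξ t : ℝ, jacDet g'4 (ξ, t) = t * (2*t + 2*ξ + 5*t^3) := by
    intro ξ t
    rw [jacDet, hfun, (hF ξ t).fderiv, detL]
  refine ⟨?_, ?_, ?_, ?_, ?_⟩
  · ext ⟨x, y⟩
    constructor
    · rintro ⟨⟨ξ, t⟩, hc, h⟩
      rw [← h]
      have hc' : t * (2*t + 2*ξ + 5*t^3) = 0 := by rw [← jac]; exact hc
      rcases mul_eq_zero.1 hc' with ht | h
      · subst ht
        exact Or.inl ⟨ξ, by rw [hdef]; norm_num⟩
      · refine Or.inr ⟨t, ?_⟩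
        have hξ : ξ = -t - (5/2)*t^3 := by linarith
        subst hξ
        rw [hdef]
        exact Prod.ext (by ring) (by ring)
    · rintro (⟨x, h⟩ | ⟨t, h⟩) <;> rw [← h]
      · exact ⟨(x, 0), by simp [critSet, jac x 0], by rw [hdef]; norm_num⟩
      · refine ⟨(-t - (5/2)*t^3, t), ?_, ?_⟩
        · show jacDet g'4 _ = 0
          rw [jac]; ring
        · rw [hdef]
          exact Prod.ext (by ring) (by ring)
  · intro k hk
    interval_cases k <;>
      · simp only [iteratedDeriv_succ', dc, iteratedDeriv_zero]
        norm_num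
  · simp only [iteratedDeriv_succ', dc, iteratedDeriv_zero]
    norm_num
  · intro k hk
    interval_cases k <;>
      · simp only [iteratedDeriv_succ', dc, iteratedDeriv_zero]
        norm_num
  · simp only [iteratedDeriv_succ', dc, iteratedDeriv_zero]
    norm_num
end

section
/- Fix a natural number n ≥ 3 and define f : ℝ² → ℝ² by f(ξ,t) = (ξ, t^{n+3} + t²ξ) (the model of an S_n-type tangential family germ). Then the critical set of f is {(ξ,t) : t·((n+3)t^{n+1} + 2ξ) = 0}, and the critical value set of f equals {(x,0) : x ∈ ℝ} ∪ {(−((n+3)/2)·t^{n+1}, −((n+1)/2)·t^{n+3}) : t ∈ ℝ}. In particular, the envelope has, in addition to the support y = 0, a second branch with a singularity of order (n+3)/(n+1) at the origin, tangent to the support. -/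
open Filter Asymptotics

/-- determinant of a triangular-type map `(u,v) ↦ (u, E(u,v))`. -/
lemma det_aux (E : (ℝ × ℝ) →L[ℝ] ℝ) :
    LinearMap.det (((ContinuousLinearMap.fst ℝ ℝ ℝ).prod E :
      (ℝ × ℝ) →L[ℝ] (ℝ × ℝ)) : (ℝ × ℝ) →ₗ[ℝ] (ℝ × ℝ)) = E (0, 1) := by
  rw [← LinearMap.det_toMatrix (Module.Basis.finTwoProd ℝ), Matrix.det_fin_two]
  simp [LinearMap.toMatrix_apply, Module.Basis.finTwoProd_zero, Module.Basis.finTwoProd_one]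

lemma iter_deriv_cpow (c : ℝ) (m : ℕ) : ∀ k : ℕ,
    iteratedDeriv k (fun x : ℝ => c * x ^ m) =
      fun x => (c * (m.descFactorial k : ℝ)) * x ^ (m - k)
  | 0 => by
    funext x; simp
  | k + 1 => by
    rw [iteratedDeriv_succ, iter_deriv_cpow c m k]
    funext x
    rw [deriv_const_mul _ (differentiableAt_pow _), deriv_pow_field,
      show m - (k + 1) = m - k - 1 by omega, Nat.descFactorial_succ]
    push_cast
    ring

lemma iter_deriv_cpow_zero_of_lt (c : ℝ) (m k : ℕ) (hk : k < m) :
    iteratedDeriv k (fun x : ℝ => c * x ^ m) 0 = 0 := by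
  rw [iter_deriv_cpow]
  simp [zero_pow (Nat.sub_ne_zero_of_lt hk)]

lemma iter_deriv_cpow_self (c : ℝ) (hc : c ≠ 0) (m : ℕ) :
    iteratedDeriv m (fun x : ℝ => c * x ^ m) 0 ≠ 0 := by
  rw [iter_deriv_cpow]
  simp [Nat.descFactorial_self, hc, Nat.factorial_ne_zero]

/-- criminant set and envelope of an `S_n`-type model
`f(ξ,t) = (ξ, t^(n+3) + t²ξ)` for `n ≥ 3`: besides the support `y = 0`, the
envelope has a branch with a singularity of order `(n+3)/(n+1)` at the origin,
tangent to the support. -/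
theorem stmt9 (n : ℕ) (hn : 3 ≤ n)
    (f : ℝ × ℝ → ℝ × ℝ)
    (hdef : ∀ ξ t : ℝ, f (ξ, t) = (ξ, t ^ (n + 3) + t ^ 2 * ξ)) :
    critSet f = {p : ℝ × ℝ | p.2 * (((n : ℝ) + 3) * p.2 ^ (n + 1) + 2 * p.1) = 0} ∧
    critVal f = (Set.range fun x : ℝ => (x, (0 : ℝ))) ∪
      (Set.range fun t : ℝ =>
        (-(((n : ℝ) + 3) / 2) * t ^ (n + 1), -(((n : ℝ) + 1) / 2) * t ^ (n + 3))) ∧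
    (∀ k : ℕ, k < n + 1 →
      iteratedDeriv k (fun t : ℝ => -(((n : ℝ) + 3) / 2) * t ^ (n + 1)) 0 = 0) ∧
    iteratedDeriv (n + 1) (fun t : ℝ => -(((n : ℝ) + 3) / 2) * t ^ (n + 1)) 0 ≠ 0 ∧
    (∀ k : ℕ, k < n + 3 →
      iteratedDeriv k (fun t : ℝ => -(((n : ℝ) + 1) / 2) * t ^ (n + 3)) 0 = 0) ∧
    iteratedDeriv (n + 3) (fun t : ℝ => -(((n : ℝ) + 1) / 2) * t ^ (n + 3)) 0 ≠ 0 := by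
  have hf : f = fun q : ℝ × ℝ => (q.1, q.2 ^ (n + 3) + q.2 ^ 2 * q.1) := by
    funext q
    obtain ⟨a, b⟩ := q
    exact hdef a b
  -- jacobian determinant computation
  have hjac : ∀ p : ℝ × ℝ, jacDet f p =
      p.2 * (((n : ℝ) + 3) * p.2 ^ (n + 1) + 2 * p.1) := by
    intro p
    have hp1 : HasFDerivAt (fun q : ℝ × ℝ => q.2 ^ (n + 3))
        ((((n + 3 : ℕ) : ℝ) * p.2 ^ (n + 3 - 1)) • ContinuousLinearMap.snd ℝ ℝ ℝ) p :=
      (hasDerivAt_pow (n + 3) p.2).comp_hasFDerivAt p hasFDerivAt_snd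
    have hp2 : HasFDerivAt (fun q : ℝ × ℝ => q.2 ^ 2)
        ((((2 : ℕ) : ℝ) * p.2 ^ (2 - 1)) • ContinuousLinearMap.snd ℝ ℝ ℝ) p :=
      (hasDerivAt_pow 2 p.2).comp_hasFDerivAt p hasFDerivAt_snd
    have hmul := hp2.mul hasFDerivAt_fst
    have hsum := hp1.add hmul
    have hF : HasFDerivAt f
        ((ContinuousLinearMap.fst ℝ ℝ ℝ).prod
          (((((n + 3 : ℕ) : ℝ) * p.2 ^ (n + 3 - 1)) • ContinuousLinearMap.snd ℝ ℝ ℝ) +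
            (p.2 ^ 2 • ContinuousLinearMap.fst ℝ ℝ ℝ +
              p.1 • ((((2 : ℕ) : ℝ) * p.2 ^ (2 - 1)) • ContinuousLinearMap.snd ℝ ℝ ℝ)))) p := by
      rw [hf]
      exact HasFDerivAt.prodMk hasFDerivAt_fst hsum
    rw [jacDet, hF.fderiv, det_aux]
    simp only [ContinuousLinearMap.add_apply, ContinuousLinearMap.smul_apply,
      ContinuousLinearMap.coe_fst', ContinuousLinearMap.coe_snd', smul_eq_mul]
    push_cast
    ring
  -- critical set
  have hcrit : critSet f =
      {p : ℝ × ℝ | p.2 * (((n : ℝ) + 3) * p.2 ^ (n + 1) + 2 * p.1) = 0} := by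
    ext p
    simp only [critSet, Set.mem_setOf_eq, hjac p]
  refine ⟨hcrit, ?_, ?_, ?_, ?_, ?_⟩
  · -- critical value set
    ext q
    constructor
    · rintro ⟨p, hp, rfl⟩
      rw [hcrit] at hp
      simp only [Set.mem_setOf_eq] at hp
      rcases mul_eq_zero.1 hp with h | h
      · left
        refine ⟨p.1, ?_⟩
        have := hdef p.1 p.2
        rw [Prod.mk.eta] at this
        rw [this, h]
        simp [zero_pow]
      · right
        refine ⟨p.2, ?_⟩
        have hx : p.1 = -(((n : ℝ) + 3) / 2) * p.2 ^ (n + 1) := by linarith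
        have := hdef p.1 p.2
        rw [Prod.mk.eta] at this
        rw [this, hx]
        have hpow : (p.2 : ℝ) ^ (n + 3) = p.2 ^ (n + 1) * p.2 ^ 2 := by ring
        refine Prod.ext rfl ?_
        simp only
        rw [hpow]
        ring
    · rintro (⟨x, rfl⟩ | ⟨t, rfl⟩)
      · refine ⟨(x, 0), ?_, ?_⟩
        · rw [hcrit]; simp
        · rw [hdef x 0]
          simp [zero_pow]
      · refine ⟨(-(((n : ℝ) + 3) / 2) * t ^ (n + 1), t), ?_, ?_⟩
        · rw [hcrit]
          simp only [Set.mem_setOf_eq]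
          ring
        · rw [hdef]
          refine Prod.ext rfl ?_
          simp only
          have hpow : (t : ℝ) ^ (n + 3) = t ^ (n + 1) * t ^ 2 := by ring
          rw [hpow]
          ring
  · intro k hk
    exact iter_deriv_cpow_zero_of_lt _ _ _ hk
  · apply iter_deriv_cpow_self
    have : (0:ℝ) < (n : ℝ) + 3 := by positivity
    intro h
    rw [neg_eq_zero, div_eq_zero_iff] at h
    rcases h with h | h <;> linarith
  · intro k hk
    exact iter_deriv_cpow_zero_of_lt _ _ _ hk
  · apply iter_deriv_cpow_self
    have : (0:ℝ) < (n : ℝ) + 1 := by positivity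
    intro h
    rw [neg_eq_zero, div_eq_zero_iff] at h
    rcases h with h | h <;> linarith
end
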